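/- arXiv:1805.10218 — 4 statements merged into one kernel-verified Lean document; each statement's English description precedes it below -/
import Mathlib

section
/- Let ŵ ∈ S_N, regarded as a bijection {1,…,N} → {1,…,n₁}×{1,…,n₂}. Suppose there are k ∈ {1,…,N−1}, i ∈ {1,…,n₁}, j ∈ {1,…,n₂−1} with ŵ(k) = (i,j) and ŵ(k+1) = (i,j+1). Let v = (1, (j j+1)) ∈ W and let v̂ ∈ S_N be determined by v̂⁻¹ = ŵ·(k k+1)·ŵ₀. Then ((v̂ŵ)^∨)⁻¹ = (k k+1), the set ŵ·Φ̂(((v̂ŵ)^∨)⁻¹) equals the singleton {ε̂_{(i,j+1)} − ε̂_{(i,j)}}, the set Φ(v⁻¹) equals the singleton {η_{j+1} − η_j}, and ρ restricts to a bijection from ŵ·Φ̂(((v̂ŵ)^∨)⁻¹) onto Φ(v⁻¹). (This is the dominance criterion verified for the horizontal length-one configuration of the paper.) -/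
open Equiv

/-- The weight lattice `L = ℤ^{n₁} × ℤ^{n₂}` of `GL(n₁) × GL(n₂)`. -/
abbrev L (n₁ n₂ : ℕ) : Type := (Fin n₁ → ℤ) × (Fin n₂ → ℤ)

/-- The weight lattice `L̂ = ℤ^N` of `GL(N)`. -/
abbrev Lhat (N : ℕ) : Type := Fin N → ℤ

/-- The standard basis vector `ε_a` of the first factor of `L`. -/
def eps {n₁ n₂ : ℕ} (a : Fin n₁) : L n₁ n₂ := (Pi.single a 1, 0)

/-- The standard basis vector `η_c` of the second factor of `L`. -/
def eta {n₁ n₂ : ℕ} (c : Fin n₂) : L n₁ n₂ := (0, Pi.single c 1)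

/-- The standard basis vector `ε̂_p` of `L̂`. -/
def epsHat {N : ℕ} (p : Fin N) : Lhat N := Pi.single p 1

/-- The lexicographic identification of `{1,…,n₁} × {1,…,n₂}` with `{1,…,n₁n₂}`,
`(i,j) ↦ (i-1)n₂ + j` in 1-based terms. -/
def lex {n₁ n₂ : ℕ} (i : Fin n₁) (j : Fin n₂) : Fin (n₁ * n₂) :=
  finProdFinEquiv (i, j)

/-- The action of `W = S_{n₁} × S_{n₂}` on `L`, characterised by
`u • ε_a = ε_{u₁ a}` and `u • η_c = η_{u₂ c}`. -/
def wAct {n₁ n₂ : ℕ} (u : Perm (Fin n₁) × Perm (Fin n₂)) (x : L n₁ n₂) : L n₁ n₂ :=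
  (x.1 ∘ u.1.symm, x.2 ∘ u.2.symm)

/-- The action of `Ŵ = S_N` on `L̂`, characterised by `û • ε̂_p = ε̂_{û p}`. -/
def hatAct {N : ℕ} (u : Perm (Fin N)) (x : Lhat N) : Lhat N := x ∘ u.symm

/-- The positive roots `Φ⁺` of `GL(n₁) × GL(n₂)`. -/
def PhiPos (n₁ n₂ : ℕ) : Set (L n₁ n₂) :=
  {x | ∃ a b : Fin n₁, a < b ∧ x = eps a - eps b} ∪
    {x | ∃ c d : Fin n₂, c < d ∧ x = eta c - eta d}

/-- The negative roots `Φ⁻ = -Φ⁺`. -/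
def PhiNeg (n₁ n₂ : ℕ) : Set (L n₁ n₂) := Neg.neg '' PhiPos n₁ n₂

/-- The inversion set `Φ(u) = Φ⁻ ∩ u · Φ⁺`. -/
def Phi {n₁ n₂ : ℕ} (u : Perm (Fin n₁) × Perm (Fin n₂)) : Set (L n₁ n₂) :=
  PhiNeg n₁ n₂ ∩ wAct u '' PhiPos n₁ n₂

/-- The positive roots `Φ̂⁺` of `GL(N)`. -/
def PhiHatPos (N : ℕ) : Set (Lhat N) :=
  {x | ∃ p q : Fin N, p < q ∧ x = epsHat p - epsHat q}

/-- The negative roots `Φ̂⁻ = -Φ̂⁺`. -/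
def PhiHatNeg (N : ℕ) : Set (Lhat N) := Neg.neg '' PhiHatPos N

/-- The inversion set `Φ̂(û) = Φ̂⁻ ∩ û · Φ̂⁺`. -/
def PhiHat {N : ℕ} (u : Perm (Fin N)) : Set (Lhat N) :=
  PhiHatNeg N ∩ hatAct u '' PhiHatPos N

/-- The longest element `ŵ₀ : k ↦ N + 1 - k` of `S_N`. -/
def w0 (N : ℕ) : Perm (Fin N) := Fin.revPerm

/-- The 3-cycle `(a b c)` sending `a ↦ b ↦ c ↦ a` (permutations composed right-to-left). -/
def cyc {α : Type*} [DecidableEq α] (a b c : α) : Perm α :=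
  Equiv.swap a b * Equiv.swap b c

lemma single_sub_inj {n : ℕ} {p q p' q' : Fin n} (hpq : p ≠ q)
    (h : (Pi.single p 1 - Pi.single q 1 : Fin n → ℤ) = Pi.single p' 1 - Pi.single q' 1) :
    p = p' ∧ q = q' := by
  have h1 := congrFun h p
  have h2 := congrFun h q
  simp only [Pi.sub_apply, Pi.single_apply] at h1 h2
  split_ifs at h1 h2 <;>
    first
    | exact ⟨by assumption, by assumption⟩
    | omega
    | simp_all
    | (exfalso; omega)

lemma single_sub_ne_zero {n : ℕ} {p q : Fin n} (hpq : p ≠ q) :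
    (Pi.single p 1 - Pi.single q 1 : Fin n → ℤ) ≠ 0 := by
  intro h
  have h1 := congrFun h p
  simp only [Pi.sub_apply, Pi.single_apply, Pi.zero_apply] at h1
  split_ifs at h1 <;> simp_all

lemma hatAct_epsHat {N : ℕ} (u : Perm (Fin N)) (p : Fin N) :
    hatAct u (epsHat p) = epsHat (u p) := by
  funext x
  simp only [hatAct, epsHat, Function.comp_apply, Pi.single_apply,
    Equiv.symm_apply_eq]

lemma hatAct_sub {N : ℕ} (u : Perm (Fin N)) (x y : Lhat N) :
    hatAct u (x - y) = hatAct u x - hatAct u y := rfl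

lemma swap_adj {n : ℕ} {k k' a b : Fin n} (hk' : (k' : ℕ) = (k : ℕ) + 1)
    (hab : a < b) (h : Equiv.swap k k' b < Equiv.swap k k' a) : a = k ∧ b = k' := by
  rw [Equiv.swap_apply_def, Equiv.swap_apply_def] at h
  split_ifs at h <;>
    simp only [Fin.ext_iff, Fin.lt_iff_val_lt_val] at * <;> omega

lemma phiHat_swap {N : ℕ} {k k' : Fin N} (hk' : (k' : ℕ) = (k : ℕ) + 1) :
    PhiHat (Equiv.swap k k') = {epsHat k' - epsHat k} := by
  have hkk' : k < k' := by rw [Fin.lt_iff_val_lt_val]; omega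
  ext x
  constructor
  · rintro ⟨⟨y, ⟨p, q, hpq, rfl⟩, rfl⟩, z, ⟨a, b, hab, rfl⟩, hz⟩
    rw [hatAct_sub, hatAct_epsHat, hatAct_epsHat] at hz
    have hz' : (epsHat (Equiv.swap k k' a) - epsHat (Equiv.swap k k' b) : Lhat N)
        = epsHat q - epsHat p := by rw [hz]; abel
    obtain ⟨h1, h2⟩ := single_sub_inj ((Equiv.swap k k').injective.ne hab.ne) hz'
    have hord : Equiv.swap k k' b < Equiv.swap k k' a := by
      rw [h1, h2]; exact hpq
    obtain ⟨rfl, rfl⟩ := swap_adj hk' hab hord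
    rw [Equiv.swap_apply_left] at h1
    rw [Equiv.swap_apply_right] at h2
    rw [← h1, ← h2]
    simp only [Set.mem_singleton_iff]
    abel
  · rintro rfl
    refine ⟨⟨epsHat k - epsHat k', ⟨k, k', hkk', rfl⟩, by abel⟩,
      epsHat k - epsHat k', ⟨k, k', hkk', rfl⟩, ?_⟩
    rw [hatAct_sub, hatAct_epsHat, hatAct_epsHat, Equiv.swap_apply_left,
      Equiv.swap_apply_right]

lemma wAct_eps {n₁ n₂ : ℕ} (u : Perm (Fin n₁) × Perm (Fin n₂)) (a : Fin n₁) :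
    wAct u (eps a) = (eps (u.1 a) : L n₁ n₂) := by
  refine Prod.ext ?_ rfl
  funext x
  simp only [wAct, eps, Function.comp_apply, Pi.single_apply, Equiv.symm_apply_eq]

lemma wAct_eta {n₁ n₂ : ℕ} (u : Perm (Fin n₁) × Perm (Fin n₂)) (c : Fin n₂) :
    wAct u (eta c) = (eta (u.2 c) : L n₁ n₂) := by
  refine Prod.ext rfl ?_
  funext x
  simp only [wAct, eta, Function.comp_apply, Pi.single_apply, Equiv.symm_apply_eq]

lemma wAct_sub {n₁ n₂ : ℕ} (u : Perm (Fin n₁) × Perm (Fin n₂)) (x y : L n₁ n₂) :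
    wAct u (x - y) = wAct u x - wAct u y := rfl

lemma phi_swap {n₁ n₂ : ℕ} {j j' : Fin n₂} (hj' : (j' : ℕ) = (j : ℕ) + 1) :
    Phi ((1, Equiv.swap j j') : Perm (Fin n₁) × Perm (Fin n₂)) = {eta j' - eta j} := by
  have hjj' : j < j' := by rw [Fin.lt_iff_val_lt_val]; omega
  ext x
  constructor
  · rintro ⟨⟨y, hy, rfl⟩, z, hz, hzx⟩
    rcases hz with ⟨a, b, hab, rfl⟩ | ⟨c, d, hcd, rfl⟩ <;>
      rcases hy with ⟨a', b', hab', rfl⟩ | ⟨c', d', hcd', rfl⟩ <;>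
        rw [wAct_sub] at hzx
    · rw [wAct_eps, wAct_eps] at hzx
      have h1 := congrArg Prod.fst hzx
      simp only [eps, Prod.fst_sub, Prod.fst_neg] at h1
      obtain ⟨e1, e2⟩ := single_sub_inj (Equiv.injective _ |>.ne hab.ne)
        (by rw [h1]; abel : (Pi.single ((1 : Perm (Fin n₁)) a) 1 -
          Pi.single ((1 : Perm (Fin n₁)) b) 1 : Fin n₁ → ℤ) = Pi.single b' 1 - Pi.single a' 1)
      exfalso
      simp only [Perm.one_apply] at e1 e2
      subst e1; subst e2
      exact absurd hab' (not_lt.mpr hab.le)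
    · exfalso
      rw [wAct_eps, wAct_eps] at hzx
      have h1 := congrArg Prod.fst hzx
      simp only [eps, eta, Prod.fst_sub, Prod.fst_neg, Perm.one_apply] at h1
      exact single_sub_ne_zero hab.ne (by rw [h1]; abel)
    · exfalso
      rw [wAct_eta, wAct_eta] at hzx
      have h1 := congrArg Prod.snd hzx
      simp only [eps, eta, Prod.snd_sub, Prod.snd_neg] at h1
      exact single_sub_ne_zero (Equiv.injective _ |>.ne hcd.ne) (by rw [h1]; abel)
    · rw [wAct_eta, wAct_eta] at hzx
      have h1 := congrArg Prod.snd hzx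
      simp only [eta, Prod.snd_sub, Prod.snd_neg] at h1
      obtain ⟨e1, e2⟩ := single_sub_inj (Equiv.injective _ |>.ne hcd.ne)
        (by rw [h1]; abel : (Pi.single (Equiv.swap j j' c) 1 -
          Pi.single (Equiv.swap j j' d) 1 : Fin n₂ → ℤ) = Pi.single d' 1 - Pi.single c' 1)
      have hord : Equiv.swap j j' d < Equiv.swap j j' c := by rw [e1, e2]; exact hcd'
      obtain ⟨rfl, rfl⟩ := swap_adj hj' hcd hord
      simp only [Set.mem_singleton_iff]
      rw [Equiv.swap_apply_left] at e1
      rw [Equiv.swap_apply_right] at e2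
      rw [← e1, ← e2]
      abel
  · intro hx
    rw [Set.mem_singleton_iff] at hx
    subst hx
    refine ⟨⟨eta j - eta j', Or.inr ⟨j, j', hjj', rfl⟩, (by abel)⟩,
      eta j - eta j', Or.inr ⟨j, j', hjj', rfl⟩, ?_⟩
    rw [wAct_sub, wAct_eta, wAct_eta]
    show eta (Equiv.swap j j' j) - eta (Equiv.swap j j' j') = _
    rw [Equiv.swap_apply_left, Equiv.swap_apply_right]

/-- the dominance criterion for the horizontal length-one configuration:
if `ŵ(k) = (i,j)` and `ŵ(k+1) = (i,j+1)`, `v = (1, (j j+1))` and `v̂⁻¹ = ŵ (k k+1) ŵ₀`,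
then `((v̂ŵ)^∨)⁻¹ = (k k+1)`, `ŵ·Φ̂(((v̂ŵ)^∨)⁻¹) = {ε̂_{(i,j+1)} - ε̂_{(i,j)}}`,
`Φ(v⁻¹) = {η_{j+1} - η_j}`, and `ρ` restricts to a bijection between these two sets. -/
theorem horizontal_length_one (n₁ n₂ : ℕ) (hn₁ : 0 < n₁) (hn₂ : 0 < n₂)
    (ρ : Lhat (n₁ * n₂) →ₗ[ℤ] L n₁ n₂)
    (hρ : ∀ (i : Fin n₁) (j : Fin n₂), ρ (epsHat (lex i j)) = eps i + eta j)
    (wh : Perm (Fin (n₁ * n₂)))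
    (k k' : Fin (n₁ * n₂)) (hk' : (k' : ℕ) = (k : ℕ) + 1)
    (i : Fin n₁) (j j' : Fin n₂) (hj' : (j' : ℕ) = (j : ℕ) + 1)
    (hwk : wh k = lex i j) (hwk' : wh k' = lex i j')
    (v : Perm (Fin n₁) × Perm (Fin n₂)) (hv : v = (1, Equiv.swap j j'))
    (vh : Perm (Fin (n₁ * n₂))) (hvh : vh⁻¹ = wh * Equiv.swap k k' * w0 (n₁ * n₂)) :
    (w0 (n₁ * n₂) * (vh * wh))⁻¹ = Equiv.swap k k' ∧
    hatAct wh '' PhiHat ((w0 (n₁ * n₂) * (vh * wh))⁻¹) =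
      {epsHat (lex i j') - epsHat (lex i j)} ∧
    Phi v⁻¹ = {(eta j' - eta j : L n₁ n₂)} ∧
    Set.BijOn (⇑ρ) (hatAct wh '' PhiHat ((w0 (n₁ * n₂) * (vh * wh))⁻¹)) (Phi v⁻¹) := by
  have h0 : (w0 (n₁ * n₂))⁻¹ = w0 (n₁ * n₂) := rfl
  have hmul : w0 (n₁ * n₂) * (vh * wh) = Equiv.swap k k' := by
    have hv2 : vh = (wh * Equiv.swap k k' * w0 (n₁ * n₂))⁻¹ := by rw [← hvh, inv_inv]
    rw [hv2]
    simp only [mul_inv_rev, h0, Equiv.swap_inv, mul_assoc, inv_mul_cancel_left,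
      inv_mul_cancel, mul_one]
    have hw2 : w0 (n₁ * n₂) * w0 (n₁ * n₂) = 1 := by
      ext x
      simp [w0, Fin.rev_rev, Equiv.Perm.mul_apply]
    rw [← mul_assoc, hw2, one_mul]
  have hgoal1 : (w0 (n₁ * n₂) * (vh * wh))⁻¹ = Equiv.swap k k' := by
    rw [hmul, Equiv.swap_inv]
  have hset : hatAct wh '' PhiHat ((w0 (n₁ * n₂) * (vh * wh))⁻¹) =
      {epsHat (lex i j') - epsHat (lex i j)} := by
    rw [hgoal1, phiHat_swap hk', Set.image_singleton, hatAct_sub, hatAct_epsHat,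
      hatAct_epsHat, hwk, hwk']
  have hvinv : v⁻¹ = ((1, Equiv.swap j j') : Perm (Fin n₁) × Perm (Fin n₂)) := by
    rw [hv, Prod.inv_mk, inv_one, Equiv.swap_inv]
  have hphi : Phi v⁻¹ = {(eta j' - eta j : L n₁ n₂)} := by rw [hvinv, phi_swap hj']
  have hAB : ρ (epsHat (lex i j') - epsHat (lex i j)) = (eta j' - eta j : L n₁ n₂) := by
    rw [map_sub, hρ, hρ]; abel
  refine ⟨hgoal1, hset, hphi, ?_⟩
  rw [hset, hphi]
  refine ⟨fun x hx => ?_, fun x hx y hy _ => ?_, fun y hy => ?_⟩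
  · rw [Set.mem_singleton_iff] at hx ⊢; rw [hx, hAB]
  · rw [Set.mem_singleton_iff] at hx hy; rw [hx, hy]
  · exact ⟨epsHat (lex i j') - epsHat (lex i j), rfl,
      by rw [hAB]; exact (Set.mem_singleton_iff.mp hy).symm⟩
end

section
/- (Configuration A.) Let ŵ ∈ S_N, regarded as a bijection {1,…,N} → {1,…,n₁}×{1,…,n₂}. Suppose there are k, k' ∈ {1,…,N−1} with |k−k'| ≥ 2, i ∈ {1,…,n₁−1}, j ∈ {1,…,n₂}, i' ∈ {1,…,n₁}, j' ∈ {1,…,n₂−1} such that ŵ(k) = (i,j), ŵ(k+1) = (i+1,j), ŵ(k') = (i',j'), ŵ(k'+1) = (i',j'+1). Let v ∈ W be determined by v⁻¹ = ((i i+1), (j' j'+1)) and let v̂ ∈ S_N be determined by v̂⁻¹ = ŵ·(k k+1)·(k' k'+1)·ŵ₀. Then ŵ·Φ̂(((v̂ŵ)^∨)⁻¹) = {ε̂_{(i+1,j)} − ε̂_{(i,j)}, ε̂_{(i',j'+1)} − ε̂_{(i',j')}}, Φ(v⁻¹) = {ε_{i+1} − ε_i, η_{j'+1} − η_{j'}},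 and ρ restricts to a bijection from ŵ·Φ̂(((v̂ŵ)^∨)⁻¹) onto Φ(v⁻¹). -/
open Equiv

/- ### Auxiliary lemmas -/

lemma pi_single_sub_inj {n : ℕ} {a b c d : Fin n} (hab : a ≠ b) (hcd : c ≠ d)
    (h : (Pi.single a 1 - Pi.single b 1 : Fin n → ℤ) = Pi.single c 1 - Pi.single d 1) :
    a = c ∧ b = d := by
  have _hcd := hcd
  have ha := congrFun h a
  have hb := congrFun h b
  simp only [Pi.sub_apply, Pi.single_apply, if_pos rfl, if_neg hab, if_neg (Ne.symm hab),
    sub_zero, zero_sub] at ha hb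
  constructor
  · by_contra hac
    rw [if_neg hac] at ha
    split_ifs at ha <;> omega
  · by_contra hbd
    rw [if_neg hbd] at hb
    split_ifs at hb <;> omega

lemma pi_single_sub_ne_zero {n : ℕ} {a b : Fin n} (hab : a ≠ b) :
    (Pi.single a 1 - Pi.single b 1 : Fin n → ℤ) ≠ 0 := by
  intro h
  have := congrFun h a
  simp [Pi.single_apply, if_neg hab] at this

lemma epsHat_sub_inj {N : ℕ} {a b c d : Fin N} (hab : a ≠ b) (hcd : c ≠ d)
    (h : (epsHat a - epsHat b : Lhat N) = epsHat c - epsHat d) : a = c ∧ b = d := by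
  unfold epsHat at h
  exact pi_single_sub_inj hab hcd h

lemma eps_sub_inj {n₁ n₂ : ℕ} {a b c d : Fin n₁} (hab : a ≠ b) (hcd : c ≠ d)
    (h : (eps a - eps b : L n₁ n₂) = eps c - eps d) : a = c ∧ b = d := by
  have h1 := congrArg Prod.fst h
  simp only [eps, Prod.fst_sub] at h1
  exact pi_single_sub_inj hab hcd h1

lemma eta_sub_inj {n₁ n₂ : ℕ} {a b c d : Fin n₂} (hab : a ≠ b) (hcd : c ≠ d)
    (h : (eta a - eta b : L n₁ n₂) = eta c - eta d) : a = c ∧ b = d := by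
  have h1 := congrArg Prod.snd h
  simp only [eta, Prod.snd_sub] at h1
  exact pi_single_sub_inj hab hcd h1

lemma eps_sub_ne_eta_sub {n₁ n₂ : ℕ} {a b : Fin n₁} {c d : Fin n₂} (hab : a ≠ b) :
    (eps a - eps b : L n₁ n₂) ≠ eta c - eta d := by
  intro h
  have h1 := congrArg Prod.fst h
  simp only [eps, eta, Prod.fst_sub, sub_self] at h1
  exact pi_single_sub_ne_zero hab h1

lemma hatAct_epsHat_sub {N : ℕ} (u : Perm (Fin N)) (a b : Fin N) :
    hatAct u (epsHat a - epsHat b) = epsHat (u a) - epsHat (u b) := by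
  funext z
  simp [hatAct, epsHat, Pi.single_apply, Equiv.symm_apply_eq]

lemma wAct_pair_eps_sub {n₁ n₂ : ℕ} (u1 : Perm (Fin n₁)) (u2 : Perm (Fin n₂)) (a b : Fin n₁) :
    wAct (u1, u2) ((eps a - eps b : L n₁ n₂)) = eps (u1 a) - eps (u1 b) := by
  unfold wAct eps
  refine Prod.ext ?_ ?_ <;> funext z <;>
    simp [Pi.single_apply, Equiv.symm_apply_eq]

lemma wAct_pair_eta_sub {n₁ n₂ : ℕ} (u1 : Perm (Fin n₁)) (u2 : Perm (Fin n₂)) (a b : Fin n₂) :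
    wAct (u1, u2) ((eta a - eta b : L n₁ n₂)) = eta (u2 a) - eta (u2 b) := by
  unfold wAct eta
  refine Prod.ext ?_ ?_ <;> funext z <;>
    simp [Pi.single_apply, Equiv.symm_apply_eq]

lemma swap_inv_aux {n : ℕ} {i i' : Fin n} (h : (i' : ℕ) = (i : ℕ) + 1) {a b : Fin n}
    (hab : a < b) (h2 : Equiv.swap i i' b < Equiv.swap i i' a) : a = i ∧ b = i' := by
  rw [Equiv.swap_apply_def, Equiv.swap_apply_def] at h2
  split_ifs at h2 <;> simp only [Fin.ext_iff, Fin.lt_def] at * <;> omega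

lemma double_swap_inv {N : ℕ} {k k₁ l l₁ : Fin N} (hk₁ : (k₁:ℕ) = (k:ℕ) + 1)
    (hl₁ : (l₁:ℕ) = (l:ℕ) + 1)
    (hsep : (k:ℕ) + 2 ≤ (l:ℕ) ∨ (l:ℕ) + 2 ≤ (k:ℕ)) {p q : Fin N} (hpq : p < q)
    (h2 : (Equiv.swap k k₁ * Equiv.swap l l₁) q < (Equiv.swap k k₁ * Equiv.swap l l₁) p) :
    (p = k ∧ q = k₁) ∨ (p = l ∧ q = l₁) := by
  simp only [Perm.mul_apply, Equiv.swap_apply_def] at h2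
  split_ifs at h2 <;> simp only [Fin.ext_iff, Fin.lt_def] at * <;> omega

/-- Configuration A: a vertical adjacent pair at positions `k, k+1` and a
horizontal adjacent pair at positions `k', k'+1` with `|k - k'| ≥ 2`; with
`v⁻¹ = ((i i+1), (j' j'+1))` and `v̂⁻¹ = ŵ (k k+1)(k' k'+1) ŵ₀`, the set
`ŵ·Φ̂(((v̂ŵ)^∨)⁻¹)` and `Φ(v⁻¹)` are as indicated and `ρ` restricts to a bijection
between them. -/
theorem config_A (n₁ n₂ : ℕ) (hn₁ : 0 < n₁) (hn₂ : 0 < n₂)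
    (ρ : Lhat (n₁ * n₂) →ₗ[ℤ] L n₁ n₂)
    (hρ : ∀ (i : Fin n₁) (j : Fin n₂), ρ (epsHat (lex i j)) = eps i + eta j)
    (wh : Perm (Fin (n₁ * n₂)))
    (k k₁ l l₁ : Fin (n₁ * n₂)) (hk₁ : (k₁ : ℕ) = (k : ℕ) + 1) (hl₁ : (l₁ : ℕ) = (l : ℕ) + 1)
    (hsep : (k : ℕ) + 2 ≤ (l : ℕ) ∨ (l : ℕ) + 2 ≤ (k : ℕ))
    (i i' : Fin n₁) (hi' : (i' : ℕ) = (i : ℕ) + 1) (j : Fin n₂)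
    (r : Fin n₁) (c c' : Fin n₂) (hc' : (c' : ℕ) = (c : ℕ) + 1)
    (hwk : wh k = lex i j) (hwk₁ : wh k₁ = lex i' j)
    (hwl : wh l = lex r c) (hwl₁ : wh l₁ = lex r c')
    (v : Perm (Fin n₁) × Perm (Fin n₂))
    (hv : v⁻¹ = (Equiv.swap i i', Equiv.swap c c'))
    (vh : Perm (Fin (n₁ * n₂)))
    (hvh : vh⁻¹ = wh * Equiv.swap k k₁ * Equiv.swap l l₁ * w0 (n₁ * n₂)) :
    hatAct wh '' PhiHat ((w0 (n₁ * n₂) * (vh * wh))⁻¹) =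
      {epsHat (lex i' j) - epsHat (lex i j), epsHat (lex r c') - epsHat (lex r c)} ∧
    Phi v⁻¹ = {(eps i' - eps i : L n₁ n₂), eta c' - eta c} ∧
    Set.BijOn (⇑ρ) (hatAct wh '' PhiHat ((w0 (n₁ * n₂) * (vh * wh))⁻¹)) (Phi v⁻¹) := by
  have hii : i ≠ i' := Fin.ne_of_val_ne (by omega)
  have hcc : c ≠ c' := Fin.ne_of_val_ne (by omega)
  have hiilt : i < i' := by rw [Fin.lt_def]; omega
  have hcclt : c < c' := by rw [Fin.lt_def]; omega
  have hkk : k < k₁ := by rw [Fin.lt_def]; omega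
  have hll : l < l₁ := by rw [Fin.lt_def]; omega
  have h1 : k ≠ l := Fin.ne_of_val_ne (by omega)
  have h2 : k ≠ l₁ := Fin.ne_of_val_ne (by omega)
  have h3 : k₁ ≠ l := Fin.ne_of_val_ne (by omega)
  have h4 : k₁ ≠ l₁ := Fin.ne_of_val_ne (by omega)
  have huk : (Equiv.swap k k₁ * Equiv.swap l l₁) k = k₁ := by
    simp only [Perm.mul_apply]
    rw [Equiv.swap_apply_of_ne_of_ne h1 h2, Equiv.swap_apply_left]
  have huk₁ : (Equiv.swap k k₁ * Equiv.swap l l₁) k₁ = k := by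
    simp only [Perm.mul_apply]
    rw [Equiv.swap_apply_of_ne_of_ne h3 h4, Equiv.swap_apply_right]
  have hul : (Equiv.swap k k₁ * Equiv.swap l l₁) l = l₁ := by
    simp only [Perm.mul_apply]
    rw [Equiv.swap_apply_left, Equiv.swap_apply_of_ne_of_ne h2.symm h4.symm]
  have hul₁ : (Equiv.swap k k₁ * Equiv.swap l l₁) l₁ = l := by
    simp only [Perm.mul_apply]
    rw [Equiv.swap_apply_right, Equiv.swap_apply_of_ne_of_ne h1.symm h3.symm]
  -- Step 1: identify the permutation.
  have hperm : (w0 (n₁ * n₂) * (vh * wh))⁻¹ = Equiv.swap k k₁ * Equiv.swap l l₁ := by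
    have hw0 : w0 (n₁ * n₂) * w0 (n₁ * n₂) = 1 := by
      ext x
      simp [w0]
    have hw0inv : (w0 (n₁ * n₂))⁻¹ = w0 (n₁ * n₂) := inv_eq_of_mul_eq_one_right hw0
    rw [mul_inv_rev, mul_inv_rev, hvh, hw0inv]
    simp only [mul_assoc]
    rw [hw0, mul_one, inv_mul_cancel_left]
  -- Step 2: the inversion set of the double swap.
  have hPhiHat : PhiHat (Equiv.swap k k₁ * Equiv.swap l l₁) =
      {epsHat k₁ - epsHat k, epsHat l₁ - epsHat l} := by
    ext x
    simp only [PhiHat, PhiHatNeg, PhiHatPos, Set.mem_inter_iff, Set.mem_image,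
      Set.mem_setOf_eq, Set.mem_insert_iff, Set.mem_singleton_iff]
    constructor
    · rintro ⟨⟨y, ⟨p', q', hpq', rfl⟩, hy⟩, z, ⟨p, q, hpq, rfl⟩, hz⟩
      rw [hatAct_epsHat_sub] at hz
      rw [← hy, neg_sub] at hz
      obtain ⟨e1, e2⟩ := epsHat_sub_inj
        (fun h => (ne_of_lt hpq) ((Equiv.swap k k₁ * Equiv.swap l l₁).injective h))
        (ne_of_lt hpq').symm hz
      have hlt : (Equiv.swap k k₁ * Equiv.swap l l₁) q < (Equiv.swap k k₁ * Equiv.swap l l₁) p := by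
        rw [e1, e2]; exact hpq'
      subst hy
      rcases double_swap_inv hk₁ hl₁ hsep hpq hlt with ⟨rfl, rfl⟩ | ⟨rfl, rfl⟩
      · left
        rw [neg_sub, ← hz, huk, huk₁]
      · right
        rw [neg_sub, ← hz, hul, hul₁]
    · rintro (rfl | rfl)
      · exact ⟨⟨epsHat k - epsHat k₁, ⟨k, k₁, hkk, rfl⟩, neg_sub _ _⟩,
          epsHat k - epsHat k₁, ⟨k, k₁, hkk, rfl⟩,
          by rw [hatAct_epsHat_sub, huk, huk₁]⟩
      · exact ⟨⟨epsHat l - epsHat l₁, ⟨l, l₁, hll, rfl⟩, neg_sub _ _⟩,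
          epsHat l - epsHat l₁, ⟨l, l₁, hll, rfl⟩,
          by rw [hatAct_epsHat_sub, hul, hul₁]⟩
  have hS : hatAct wh '' PhiHat ((w0 (n₁ * n₂) * (vh * wh))⁻¹) =
      {epsHat (lex i' j) - epsHat (lex i j), epsHat (lex r c') - epsHat (lex r c)} := by
    rw [hperm, hPhiHat, Set.image_pair, hatAct_epsHat_sub, hatAct_epsHat_sub,
      hwk₁, hwk, hwl₁, hwl]
  -- Step 3: the inversion set of v⁻¹.
  have hPhi : Phi v⁻¹ = {(eps i' - eps i : L n₁ n₂), eta c' - eta c} := by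
    rw [hv]
    ext x
    simp only [Phi, PhiNeg, PhiPos, Set.mem_inter_iff, Set.mem_image, Set.mem_union,
      Set.mem_setOf_eq, Set.mem_insert_iff, Set.mem_singleton_iff]
    constructor
    · rintro ⟨⟨y, hy, hyx⟩, z, hz, hzx⟩
      rcases hz with ⟨p, q, hpq, rfl⟩ | ⟨p, q, hpq, rfl⟩
      · rw [wAct_pair_eps_sub] at hzx
        rcases hy with ⟨a, b, habl, rfl⟩ | ⟨a, b, habl, rfl⟩
        · rw [← hyx, neg_sub] at hzx
          obtain ⟨e1, e2⟩ := eps_sub_inj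
            (fun h => (ne_of_lt hpq) ((Equiv.swap i i').injective h))
            (ne_of_lt habl).symm hzx
          have hlt : Equiv.swap i i' q < Equiv.swap i i' p := by
            rw [e1, e2]; exact habl
          subst hyx
          obtain ⟨rfl, rfl⟩ := swap_inv_aux hi' hpq hlt
          left
          rw [neg_sub, ← hzx, Equiv.swap_apply_left, Equiv.swap_apply_right]
        · rw [← hyx, neg_sub] at hzx
          exact absurd hzx (eps_sub_ne_eta_sub
            (fun h => (ne_of_lt hpq) ((Equiv.swap i i').injective h)))
      · rw [wAct_pair_eta_sub] at hzx
        rcases hy with ⟨a, b, habl, rfl⟩ | ⟨a, b, habl, rfl⟩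
        · rw [← hyx, neg_sub] at hzx
          exact absurd hzx.symm (eps_sub_ne_eta_sub (ne_of_lt habl).symm)
        · rw [← hyx, neg_sub] at hzx
          obtain ⟨e1, e2⟩ := eta_sub_inj
            (fun h => (ne_of_lt hpq) ((Equiv.swap c c').injective h))
            (ne_of_lt habl).symm hzx
          have hlt : Equiv.swap c c' q < Equiv.swap c c' p := by
            rw [e1, e2]; exact habl
          subst hyx
          obtain ⟨rfl, rfl⟩ := swap_inv_aux hc' hpq hlt
          right
          rw [neg_sub, ← hzx, Equiv.swap_apply_left, Equiv.swap_apply_right]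
    · rintro (rfl | rfl)
      · exact ⟨⟨eps i - eps i', Or.inl ⟨i, i', hiilt, rfl⟩, neg_sub _ _⟩,
          eps i - eps i', Or.inl ⟨i, i', hiilt, rfl⟩,
          by rw [wAct_pair_eps_sub, Equiv.swap_apply_left, Equiv.swap_apply_right]⟩
      · exact ⟨⟨eta c - eta c', Or.inr ⟨c, c', hcclt, rfl⟩, neg_sub _ _⟩,
          eta c - eta c', Or.inr ⟨c, c', hcclt, rfl⟩,
          by rw [wAct_pair_eta_sub, Equiv.swap_apply_left, Equiv.swap_apply_right]⟩
  -- Step 4: the bijection.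
  have hρ1 : ρ (epsHat (lex i' j) - epsHat (lex i j)) = eps i' - eps i := by
    rw [map_sub, hρ, hρ]
    abel
  have hρ2 : ρ (epsHat (lex r c') - epsHat (lex r c)) = eta c' - eta c := by
    rw [map_sub, hρ, hρ]
    abel
  have hne : (eps i' - eps i : L n₁ n₂) ≠ eta c' - eta c := eps_sub_ne_eta_sub hii.symm
  refine ⟨hS, hPhi, ?_⟩
  rw [hS, hPhi]
  refine ⟨?_, ?_, ?_⟩
  · intro x hx
    simp only [Set.mem_insert_iff, Set.mem_singleton_iff] at hx ⊢
    rcases hx with rfl | rfl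
    · left; exact hρ1
    · right; exact hρ2
  · intro x hx y hy hxy
    simp only [Set.mem_insert_iff, Set.mem_singleton_iff] at hx hy
    rcases hx with rfl | rfl <;> rcases hy with rfl | rfl
    · rfl
    · rw [hρ1, hρ2] at hxy
      exact absurd hxy hne
    · rw [hρ2, hρ1] at hxy
      exact absurd hxy.symm hne
    · rfl
  · intro y hy
    simp only [Set.mem_insert_iff, Set.mem_singleton_iff] at hy
    rcases hy with rfl | rfl
    · exact ⟨_, Set.mem_insert _ _, hρ1⟩
    · exact ⟨_, Set.mem_insert_of_mem _ rfl, hρ2⟩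
end

section
/- (Configuration b, the transpose of Configuration B.) Let ŵ ∈ S_N, regarded as a bijection {1,…,N} → {1,…,n₁}×{1,…,n₂}. Suppose there are k, k' ∈ {1,…,N−1} with |k−k'| ≥ 2, i, i' ∈ {1,…,n₁}, and j, j' ∈ {1,…,n₂−1} with |j−j'| ≥ 2 such that ŵ(k) = (i,j), ŵ(k+1) = (i,j+1), ŵ(k') = (i',j'), ŵ(k'+1) = (i',j'+1). Let v ∈ W be determined by v⁻¹ = (1, (j j+1)(j' j'+1)) and let v̂ ∈ S_N be determined by v̂⁻¹ = ŵ·(k k+1)·(k' k'+1)·ŵ₀. Then ŵ·Φ̂(((v̂ŵ)^∨)⁻¹) = {ε̂_{(i,j+1)} − ε̂_{(i,j)}, ε̂_{(i',j'+1)} − ε̂_{(i',j')}}, Φ(v⁻¹) = {η_{j+1} − η_j, η_{j'+1} − η_{j'}}, and ρ restricts to a bijection from ŵ·Φ̂(((v̂ŵ)^∨)⁻¹) onto Φ(v⁻¹). -/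
open Equiv

lemma single_sub_ne_zero_s5 {n : ℕ} {a b : Fin n} (h : a ≠ b) :
    (Pi.single a 1 - Pi.single b 1 : Fin n → ℤ) ≠ 0 := by
  intro hc
  have := congrFun hc a
  simp [Pi.single_apply, h] at this

lemma single_sub_eq_iff {n : ℕ} {a b c d : Fin n} (hab : a ≠ b) (hcd : c ≠ d) :
    (Pi.single a 1 - Pi.single b 1 : Fin n → ℤ) = Pi.single c 1 - Pi.single d 1 ↔
      a = c ∧ b = d := by
  constructor
  · intro h
    have hac : a = c := by
      by_contra hac
      have h1 := congrFun h a
      simp [Pi.single_apply, hab, hac] at h1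
      split at h1 <;> omega
    subst hac
    refine ⟨rfl, ?_⟩
    have h2 := congrFun h d
    simp [Pi.single_apply, (show d ≠ a from fun e => hcd e.symm)] at h2
    exact h2.symm
  · rintro ⟨rfl, rfl⟩; rfl

lemma inv_pair {N : ℕ} {k k₁ l l₁ : Fin N} (hk₁ : (k₁:ℕ) = k + 1) (hl₁ : (l₁:ℕ) = l + 1)
    (hsep : (k:ℕ) + 2 ≤ l ∨ (l:ℕ) + 2 ≤ k) {p q : Fin N} (hpq : p < q)
    (h : ((Equiv.swap k k₁ * Equiv.swap l l₁) q : Fin N) < (Equiv.swap k k₁ * Equiv.swap l l₁) p) :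
    (p = k ∧ q = k₁) ∨ (p = l ∧ q = l₁) := by
  simp only [Equiv.Perm.mul_apply, Equiv.swap_apply_def] at h
  split_ifs at h <;>
    (simp only [Fin.lt_def, Fin.ext_iff, ne_eq] at *) <;> omega

lemma hatAct_diff {N : ℕ} (w : Perm (Fin N)) (p q : Fin N) :
    hatAct w (epsHat p - epsHat q) = epsHat (w p) - epsHat (w q) := by
  funext t
  simp [hatAct, epsHat, Function.comp, Pi.single_apply, Equiv.symm_apply_eq]

lemma fin_ne {N : ℕ} {a b : Fin N} (h : (a:ℕ) ≠ (b:ℕ)) : a ≠ b := by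
  simp only [ne_eq, Fin.ext_iff]; exact h

lemma swap_pair_apply₁ {N : ℕ} {k k₁ l l₁ : Fin N} (hk₁ : (k₁:ℕ) = k + 1) (hl₁ : (l₁:ℕ) = l + 1)
    (hsep : (k:ℕ) + 2 ≤ l ∨ (l:ℕ) + 2 ≤ k) :
    (Equiv.swap k k₁ * Equiv.swap l l₁) k = k₁ := by
  have h1 : k ≠ l := fin_ne (by omega)
  have h2 : k ≠ l₁ := fin_ne (by omega)
  simp [Equiv.Perm.mul_apply, Equiv.swap_apply_of_ne_of_ne h1 h2]

lemma swap_pair_apply₂ {N : ℕ} {k k₁ l l₁ : Fin N} (hk₁ : (k₁:ℕ) = k + 1) (hl₁ : (l₁:ℕ) = l + 1)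
    (hsep : (k:ℕ) + 2 ≤ l ∨ (l:ℕ) + 2 ≤ k) :
    (Equiv.swap k k₁ * Equiv.swap l l₁) k₁ = k := by
  have h1 : k₁ ≠ l := fin_ne (by omega)
  have h2 : k₁ ≠ l₁ := fin_ne (by omega)
  simp [Equiv.Perm.mul_apply, Equiv.swap_apply_of_ne_of_ne h1 h2]

lemma phiHat_pair {N : ℕ} {k k₁ l l₁ : Fin N} (hk₁ : (k₁:ℕ) = k + 1) (hl₁ : (l₁:ℕ) = l + 1)
    (hsep : (k:ℕ) + 2 ≤ l ∨ (l:ℕ) + 2 ≤ k) :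
    PhiHat (Equiv.swap k k₁ * Equiv.swap l l₁) =
      {epsHat k₁ - epsHat k, epsHat l₁ - epsHat l} := by
  have hkk : k < k₁ := by simp only [Fin.lt_def]; omega
  have hll : l < l₁ := by simp only [Fin.lt_def]; omega
  have huk : (Equiv.swap k k₁ * Equiv.swap l l₁) k = k₁ := swap_pair_apply₁ hk₁ hl₁ hsep
  have huk₁ : (Equiv.swap k k₁ * Equiv.swap l l₁) k₁ = k := swap_pair_apply₂ hk₁ hl₁ hsep
  have hul : (Equiv.swap k k₁ * Equiv.swap l l₁) l = l₁ := by
    have h1 : l₁ ≠ k := fin_ne (by omega)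
    have h2 : l₁ ≠ k₁ := fin_ne (by omega)
    simp [Equiv.Perm.mul_apply, Equiv.swap_apply_of_ne_of_ne h1 h2]
  have hul₁ : (Equiv.swap k k₁ * Equiv.swap l l₁) l₁ = l := by
    have h1 : l ≠ k := fin_ne (by omega)
    have h2 : l ≠ k₁ := fin_ne (by omega)
    simp [Equiv.Perm.mul_apply, Equiv.swap_apply_of_ne_of_ne h1 h2]
  ext x
  constructor
  · rintro ⟨⟨y, ⟨p, q, hpq, rfl⟩, rfl⟩, z, ⟨p', q', hp'q', rfl⟩, hz⟩
    rw [hatAct_diff] at hz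
    rw [neg_sub] at hz ⊢
    obtain ⟨hq, hp⟩ := (single_sub_eq_iff (a := (Equiv.swap k k₁ * Equiv.swap l l₁) p')
      (by intro e; exact hp'q'.ne ((Equiv.swap k k₁ * Equiv.swap l l₁).injective e))
      hpq.ne').mp hz
    have hinv := inv_pair hk₁ hl₁ hsep hp'q' (by rw [hq, hp]; exact hpq)
    rcases hinv with ⟨rfl, rfl⟩ | ⟨rfl, rfl⟩
    · left; rw [← hq, ← hp, huk, huk₁]
    · right; rw [← hq, ← hp, hul, hul₁]; rfl
  · rintro (rfl | rfl)
    · exact ⟨⟨epsHat k - epsHat k₁, ⟨k, k₁, hkk, rfl⟩, neg_sub _ _⟩,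
        epsHat k - epsHat k₁, ⟨k, k₁, hkk, rfl⟩, by rw [hatAct_diff, huk, huk₁]⟩
    · exact ⟨⟨epsHat l - epsHat l₁, ⟨l, l₁, hll, rfl⟩, neg_sub _ _⟩,
        epsHat l - epsHat l₁, ⟨l, l₁, hll, rfl⟩, by rw [hatAct_diff, hul, hul₁]⟩

lemma wAct_eps_sub {n₁ n₂ : ℕ} (u : Perm (Fin n₁) × Perm (Fin n₂)) (a b : Fin n₁) :
    wAct u (eps a - eps b) = (eps (u.1 a) - eps (u.1 b) : L n₁ n₂) := by
  refine Prod.ext ?_ ?_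
  · funext t
    simp [wAct, eps, Function.comp, Pi.single_apply, Equiv.symm_apply_eq]
  · funext t
    simp [wAct, eps]

lemma wAct_eta_sub {n₁ n₂ : ℕ} (u : Perm (Fin n₁) × Perm (Fin n₂)) (c d : Fin n₂) :
    wAct u (eta c - eta d) = (eta (u.2 c) - eta (u.2 d) : L n₁ n₂) := by
  refine Prod.ext ?_ ?_
  · funext t
    simp [wAct, eta]
  · funext t
    simp [wAct, eta, Function.comp, Pi.single_apply, Equiv.symm_apply_eq]

lemma eps_sub_eq_iff {n₁ n₂ : ℕ} {a b c d : Fin n₁} (hab : a ≠ b) (hcd : c ≠ d) :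
    (eps a - eps b : L n₁ n₂) = eps c - eps d ↔ a = c ∧ b = d := by
  constructor
  · intro h
    have h1 : (Pi.single a 1 - Pi.single b 1 : Fin n₁ → ℤ) = Pi.single c 1 - Pi.single d 1 := by
      have := congrArg Prod.fst h
      simpa [eps] using this
    exact (single_sub_eq_iff hab hcd).mp h1
  · rintro ⟨rfl, rfl⟩; rfl

lemma eta_sub_eq_iff {n₁ n₂ : ℕ} {a b c d : Fin n₂} (hab : a ≠ b) (hcd : c ≠ d) :
    (eta a - eta b : L n₁ n₂) = eta c - eta d ↔ a = c ∧ b = d := by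
  constructor
  · intro h
    have h1 : (Pi.single a 1 - Pi.single b 1 : Fin n₂ → ℤ) = Pi.single c 1 - Pi.single d 1 := by
      have := congrArg Prod.snd h
      simpa [eta] using this
    exact (single_sub_eq_iff hab hcd).mp h1
  · rintro ⟨rfl, rfl⟩; rfl

lemma phi_pair {n₁ n₂ : ℕ} {j j₁ j' j'₁ : Fin n₂} (hj₁ : (j₁:ℕ) = j + 1) (hj'₁ : (j'₁:ℕ) = j' + 1)
    (hjsep : (j:ℕ) + 2 ≤ j' ∨ (j':ℕ) + 2 ≤ j) :
    Phi (((1 : Perm (Fin n₁)), Equiv.swap j j₁ * Equiv.swap j' j'₁) :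
        Perm (Fin n₁) × Perm (Fin n₂)) =
      {(eta j₁ - eta j : L n₁ n₂), eta j'₁ - eta j'} := by
  set s := Equiv.swap j j₁ * Equiv.swap j' j'₁ with hs
  have hjj : j < j₁ := by simp only [Fin.lt_def]; omega
  have hj'j' : j' < j'₁ := by simp only [Fin.lt_def]; omega
  have huj : s j = j₁ := swap_pair_apply₁ hj₁ hj'₁ hjsep
  have huj₁ : s j₁ = j := swap_pair_apply₂ hj₁ hj'₁ hjsep
  have huj' : s j' = j'₁ := by
    have h1 : j'₁ ≠ j := fin_ne (by omega)
    have h2 : j'₁ ≠ j₁ := fin_ne (by omega)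
    simp [hs, Equiv.Perm.mul_apply, Equiv.swap_apply_of_ne_of_ne h1 h2]
  have huj'₁ : s j'₁ = j' := by
    have h1 : j' ≠ j := fin_ne (by omega)
    have h2 : j' ≠ j₁ := fin_ne (by omega)
    simp [hs, Equiv.Perm.mul_apply, Equiv.swap_apply_of_ne_of_ne h1 h2]
  ext x
  constructor
  · rintro ⟨⟨y, hy, rfl⟩, z, hz, hzx⟩
    rcases hy with ⟨a, b, hab, rfl⟩ | ⟨p, q, hpq, rfl⟩
    · rw [neg_sub]
      rw [neg_sub] at hzx
      rcases hz with ⟨a', b', hab', rfl⟩ | ⟨c', d', hcd', rfl⟩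
      · rw [wAct_eps_sub] at hzx
        simp only [Equiv.Perm.one_apply] at hzx
        obtain ⟨h1, h2⟩ := (eps_sub_eq_iff hab'.ne hab.ne').mp hzx
        rw [h1, h2] at hab'
        exact (lt_asymm hab hab').elim
      · rw [wAct_eta_sub] at hzx
        exact (eps_sub_ne_eta_sub hab.ne' hzx.symm).elim
    · rw [neg_sub]
      rw [neg_sub] at hzx
      rcases hz with ⟨a', b', hab', rfl⟩ | ⟨c', d', hcd', rfl⟩
      · rw [wAct_eps_sub] at hzx
        exact (eps_sub_ne_eta_sub hab'.ne hzx).elim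
      · rw [wAct_eta_sub] at hzx
        obtain ⟨h1, h2⟩ := (eta_sub_eq_iff
          (by intro e; exact hcd'.ne (s.injective e)) hpq.ne').mp hzx
        rw [← hzx]
        have hinv := inv_pair hj₁ hj'₁ hjsep hcd' (by
          show s d' < s c'
          rw [h1, h2]; exact hpq)
        rcases hinv with ⟨e1, e2⟩ | ⟨e1, e2⟩
        · left
          rw [e1, e2]
          show (eta (s j) - eta (s j₁) : L n₁ n₂) = eta j₁ - eta j
          rw [huj, huj₁]
        · right
          rw [e1, e2]
          show (eta (s j') - eta (s j'₁) : L n₁ n₂) = eta j'₁ - eta j'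
          rw [huj', huj'₁]
  · rintro (rfl | rfl)
    · exact ⟨⟨eta j - eta j₁, Or.inr ⟨j, j₁, hjj, rfl⟩, neg_sub _ _⟩,
        eta j - eta j₁, Or.inr ⟨j, j₁, hjj, rfl⟩, by
          rw [wAct_eta_sub]
          show (eta (s j) - eta (s j₁) : L n₁ n₂) = eta j₁ - eta j
          rw [huj, huj₁]⟩
    · exact ⟨⟨eta j' - eta j'₁, Or.inr ⟨j', j'₁, hj'j', rfl⟩, neg_sub _ _⟩,
        eta j' - eta j'₁, Or.inr ⟨j', j'₁, hj'j', rfl⟩, by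
          rw [wAct_eta_sub]
          show (eta (s j') - eta (s j'₁) : L n₁ n₂) = eta j'₁ - eta j'
          rw [huj', huj'₁]⟩

/-- Configuration b, the transpose of Configuration B: two horizontal
adjacent pairs at positions `k, k+1` and `k', k'+1` with `|k - k'| ≥ 2`, in columns
`j, j+1` and `j', j'+1` with `|j - j'| ≥ 2`; with `v⁻¹ = (1, (j j+1)(j' j'+1))` and
`v̂⁻¹ = ŵ (k k+1)(k' k'+1) ŵ₀`, the sets are as indicated and `ρ` restricts to a
bijection between them. -/
theorem config_b_transposed (n₁ n₂ : ℕ) (hn₁ : 0 < n₁) (hn₂ : 0 < n₂)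
    (ρ : Lhat (n₁ * n₂) →ₗ[ℤ] L n₁ n₂)
    (hρ : ∀ (i : Fin n₁) (j : Fin n₂), ρ (epsHat (lex i j)) = eps i + eta j)
    (wh : Perm (Fin (n₁ * n₂)))
    (k k₁ l l₁ : Fin (n₁ * n₂)) (hk₁ : (k₁ : ℕ) = (k : ℕ) + 1) (hl₁ : (l₁ : ℕ) = (l : ℕ) + 1)
    (hsep : (k : ℕ) + 2 ≤ (l : ℕ) ∨ (l : ℕ) + 2 ≤ (k : ℕ))
    (i i' : Fin n₁)
    (j j₁ j' j'₁ : Fin n₂) (hj₁ : (j₁ : ℕ) = (j : ℕ) + 1) (hj'₁ : (j'₁ : ℕ) = (j' : ℕ) + 1)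
    (hjsep : (j : ℕ) + 2 ≤ (j' : ℕ) ∨ (j' : ℕ) + 2 ≤ (j : ℕ))
    (hwk : wh k = lex i j) (hwk₁ : wh k₁ = lex i j₁)
    (hwl : wh l = lex i' j') (hwl₁ : wh l₁ = lex i' j'₁)
    (v : Perm (Fin n₁) × Perm (Fin n₂))
    (hv : v⁻¹ = (1, Equiv.swap j j₁ * Equiv.swap j' j'₁))
    (vh : Perm (Fin (n₁ * n₂)))
    (hvh : vh⁻¹ = wh * Equiv.swap k k₁ * Equiv.swap l l₁ * w0 (n₁ * n₂)) :
    hatAct wh '' PhiHat ((w0 (n₁ * n₂) * (vh * wh))⁻¹) =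
      {epsHat (lex i j₁) - epsHat (lex i j), epsHat (lex i' j'₁) - epsHat (lex i' j')} ∧
    Phi v⁻¹ = {(eta j₁ - eta j : L n₁ n₂), eta j'₁ - eta j'} ∧
    Set.BijOn (⇑ρ) (hatAct wh '' PhiHat ((w0 (n₁ * n₂) * (vh * wh))⁻¹)) (Phi v⁻¹) := by
  have hw0 : w0 (n₁ * n₂) * w0 (n₁ * n₂) = 1 := by
    apply Equiv.ext; intro x; simp [w0]
  have hw0inv : (w0 (n₁ * n₂))⁻¹ = w0 (n₁ * n₂) := by
    apply Equiv.ext; intro x; simp [w0, Equiv.Perm.inv_def]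
  have hu : (w0 (n₁ * n₂) * (vh * wh))⁻¹ = Equiv.swap k k₁ * Equiv.swap l l₁ := by
    rw [mul_inv_rev, mul_inv_rev, hvh, hw0inv]
    simp only [mul_assoc, hw0, mul_one, inv_mul_cancel_left]
  have himg : hatAct wh '' ({epsHat k₁ - epsHat k, epsHat l₁ - epsHat l} :
      Set (Lhat (n₁ * n₂))) =
      {epsHat (lex i j₁) - epsHat (lex i j), epsHat (lex i' j'₁) - epsHat (lex i' j')} := by
    rw [Set.image_insert_eq, Set.image_singleton, hatAct_diff, hatAct_diff,
      hwk, hwk₁, hwl, hwl₁]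
  have hset1 : hatAct wh '' PhiHat ((w0 (n₁ * n₂) * (vh * wh))⁻¹) =
      {epsHat (lex i j₁) - epsHat (lex i j), epsHat (lex i' j'₁) - epsHat (lex i' j')} := by
    rw [hu, phiHat_pair hk₁ hl₁ hsep]; exact himg
  have hPhi : Phi v⁻¹ = {(eta j₁ - eta j : L n₁ n₂), eta j'₁ - eta j'} := by
    rw [hv]; exact phi_pair hj₁ hj'₁ hjsep
  have hr1 : ρ (epsHat (lex i j₁) - epsHat (lex i j)) = eta j₁ - eta j := by
    rw [map_sub, hρ, hρ]; abel
  have hr2 : ρ (epsHat (lex i' j'₁) - epsHat (lex i' j')) = eta j'₁ - eta j' := by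
    rw [map_sub, hρ, hρ]; abel
  have hne : (eta j₁ - eta j : L n₁ n₂) ≠ eta j'₁ - eta j' := by
    intro h
    obtain ⟨h1, h2⟩ := (eta_sub_eq_iff (fin_ne (by omega)) (fin_ne (by omega))).mp h
    exact (fin_ne (show ((j₁ : Fin n₂) : ℕ) ≠ (j'₁ : ℕ) from by omega)) h1
  refine ⟨hset1, hPhi, ?_⟩
  rw [hset1, hPhi]
  refine ⟨?_, ?_, ?_⟩
  · rintro x (rfl | rfl)
    · rw [hr1]; exact Or.inl rfl
    · rw [hr2]; exact Or.inr rfl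
  · rintro x (rfl | rfl) y (rfl | rfl) hxy
    · rfl
    · rw [hr1, hr2] at hxy; exact (hne hxy).elim
    · rw [hr1, hr2] at hxy; exact (hne hxy.symm).elim
    · rfl
  · rintro x (rfl | rfl)
    · exact ⟨_, Or.inl rfl, hr1⟩
    · exact ⟨_, Or.inr rfl, hr2⟩
end

section
/- (Configuration C.) Let ŵ ∈ S_N, regarded as a bijection {1,…,N} → {1,…,n₁}×{1,…,n₂}. Suppose there are k ∈ {1,…,N−2}, i ∈ {1,…,n₁−1}, j ∈ {1,…,n₂−1} such that ŵ(k) = (i,j) and {ŵ(k+1), ŵ(k+2)} = {(i+1,j), (i,j+1)}. Let v ∈ W be determined by v⁻¹ = ((i i+1), (j j+1)) and let v̂ ∈ S_N be determined by v̂⁻¹ = ŵ·(k k+1 k+2)·ŵ₀, where (k k+1 k+2) is the 3-cycle sending k ↦ k+1 ↦ k+2 ↦ k. Then ŵ·Φ̂(((v̂ŵ)^∨)⁻¹) = {ε̂_{(i+1,j)} − ε̂_{(i,j)}, ε̂_{(i,j+1)} − ε̂_{(i,j)}}, Φ(v⁻¹) = {ε_{i+1} − ε_i, η_{j+1} − η_j},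 and ρ restricts to a bijection from ŵ·Φ̂(((v̂ŵ)^∨)⁻¹) onto Φ(v⁻¹). -/
open Equiv

/-! The inversion set `Φ̂(u)` consists of the roots `ε̂_{u p} - ε̂_{u q}` with `p < q` and
`u q < u p`. Here `((v̂ ŵ)^∨)⁻¹` is the 3-cycle `(k k+1 k+2)`, whose only inversions are
`(k, k+2)` and `(k+1, k+2)`, so `ŵ` carries `Φ̂` of it to
`{ε̂_{ŵ(k+1)} - ε̂_{ŵ k}, ε̂_{ŵ(k+2)} - ε̂_{ŵ k}}`.
On the `W` side, `Φ(u₁, u₂)` is the disjoint union of `Φ̂(u₁) × {0}` and `{0} × Φ̂(u₂)`, and an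
adjacent transposition has the single inversion `(i, i+1)`. Finally `ρ` sends the two roots of
the first set to the two distinct roots `ε_{i+1} - ε_i` and `η_{j+1} - η_j`. -/

lemma epsHat_sub_epsHat_inj {N : ℕ} {p q p' q' : Fin N} (hpq : p ≠ q) :
    epsHat p - epsHat q = epsHat p' - epsHat q' ↔ p = p' ∧ q = q' := by
  rw [sub_eq_sub_iff_add_eq_add, epsHat, epsHat, epsHat, epsHat,
    Pi.single_add_single_eq_single_add_single one_ne_zero one_ne_zero]
  constructor
  · rintro (⟨hp, hq⟩ | ⟨-, hpq', -⟩ | ⟨h, -⟩)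
    · exact ⟨hp, hq.symm⟩
    · exact absurd hpq' hpq
    · exact absurd h (by norm_num)
  · rintro ⟨rfl, rfl⟩
    exact Or.inl ⟨rfl, rfl⟩

lemma hatAct_epsHat_sub_epsHat {N : ℕ} (u : Perm (Fin N)) (p q : Fin N) :
    hatAct u (epsHat p - epsHat q) = epsHat (u p) - epsHat (u q) := by
  funext x
  simp [hatAct, epsHat, Pi.single_apply, Equiv.symm_apply_eq]

lemma mem_PhiHat_iff {N : ℕ} {u : Perm (Fin N)} {x : Lhat N} :
    x ∈ PhiHat u ↔ ∃ p q, (p < q ∧ u q < u p) ∧ x = epsHat (u p) - epsHat (u q) := by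
  constructor
  · rintro ⟨⟨-, ⟨a, b, hab, rfl⟩, rfl⟩, -, ⟨p, q, hpq, rfl⟩, hx⟩
    rw [hatAct_epsHat_sub_epsHat, neg_sub, eq_comm, epsHat_sub_epsHat_inj hab.ne'] at hx
    obtain ⟨rfl, rfl⟩ := hx
    exact ⟨p, q, ⟨hpq, hab⟩, neg_sub _ _⟩
  · rintro ⟨p, q, ⟨hpq, hu⟩, rfl⟩
    exact ⟨⟨_, ⟨u q, u p, hu, rfl⟩, neg_sub _ _⟩, _, ⟨p, q, hpq, rfl⟩,
      hatAct_epsHat_sub_epsHat u p q⟩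

lemma zero_notMem_PhiHatNeg (N : ℕ) : (0 : Lhat N) ∉ PhiHatNeg N := by
  rintro ⟨-, ⟨p, q, hpq, rfl⟩, h⟩
  rw [neg_eq_zero, sub_eq_zero] at h
  simpa [epsHat, hpq.ne'] using congrFun h p

lemma swap_inversion_iff {n : ℕ} {i i' p q : Fin n} (hi' : (i' : ℕ) = i + 1) :
    (p < q ∧ swap i i' q < swap i i' p) ↔ p = i ∧ q = i' := by
  constructor
  · rintro ⟨hpq, h⟩
    rw [swap_apply_def, swap_apply_def] at h
    split_ifs at h <;> simp only [Fin.lt_def, Fin.ext_iff] at * <;> omega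
  · rintro ⟨rfl, rfl⟩
    simp [swap_apply_left, swap_apply_right, Fin.lt_def, hi']

lemma cyc_inversion_iff {N : ℕ} {k k₁ k₂ p q : Fin N} (hk₁ : (k₁ : ℕ) = k + 1)
    (hk₂ : (k₂ : ℕ) = k + 2) :
    (p < q ∧ cyc k k₁ k₂ q < cyc k k₁ k₂ p) ↔ (p = k ∨ p = k₁) ∧ q = k₂ := by
  simp only [cyc, Perm.mul_apply, swap_apply_def]
  split_ifs <;> simp only [Fin.lt_def, Fin.ext_iff, not_true_eq_false] at * <;> omega

lemma PhiHat_swap {n : ℕ} {i i' : Fin n} (hi' : (i' : ℕ) = i + 1) :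
    PhiHat (swap i i') = {epsHat i' - epsHat i} := by
  ext x
  simp only [mem_PhiHat_iff, swap_inversion_iff hi', Set.mem_singleton_iff]
  constructor
  · rintro ⟨p, q, ⟨rfl, rfl⟩, rfl⟩
    rw [swap_apply_left, swap_apply_right]
  · rintro rfl
    exact ⟨i, i', ⟨rfl, rfl⟩, by rw [swap_apply_left, swap_apply_right]⟩

lemma PhiHat_cyc {N : ℕ} {k k₁ k₂ : Fin N} (hk₁ : (k₁ : ℕ) = k + 1) (hk₂ : (k₂ : ℕ) = k + 2) :
    PhiHat (cyc k k₁ k₂) = {epsHat k₁ - epsHat k, epsHat k₂ - epsHat k} := by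
  have hk₁k : k₁ ≠ k := by simp only [ne_eq, Fin.ext_iff]; omega
  have hk₂k : k₂ ≠ k := by simp only [ne_eq, Fin.ext_iff]; omega
  have hk₂k₁ : k₂ ≠ k₁ := by simp only [ne_eq, Fin.ext_iff]; omega
  have hck : cyc k k₁ k₂ k = k₁ := by
    rw [cyc, Perm.mul_apply, swap_apply_of_ne_of_ne hk₁k.symm hk₂k.symm, swap_apply_left]
  have hck₁ : cyc k k₁ k₂ k₁ = k₂ := by
    rw [cyc, Perm.mul_apply, swap_apply_left, swap_apply_of_ne_of_ne hk₂k hk₂k₁]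
  have hck₂ : cyc k k₁ k₂ k₂ = k := by
    rw [cyc, Perm.mul_apply, swap_apply_right, swap_apply_right]
  ext x
  simp only [mem_PhiHat_iff, cyc_inversion_iff hk₁ hk₂, Set.mem_insert_iff,
    Set.mem_singleton_iff]
  constructor
  · rintro ⟨p, _, ⟨rfl | rfl, rfl⟩, rfl⟩
    · exact Or.inl (by rw [hck, hck₂])
    · exact Or.inr (by rw [hck₁, hck₂])
  · rintro (rfl | rfl)
    · exact ⟨k, k₂, ⟨Or.inl rfl, rfl⟩, by rw [hck, hck₂]⟩
    · exact ⟨k₁, k₂, ⟨Or.inr rfl, rfl⟩, by rw [hck₁, hck₂]⟩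

lemma PhiPos_eq (n₁ n₂ : ℕ) :
    PhiPos n₁ n₂ = PhiHatPos n₁ ×ˢ {0} ∪ {0} ×ˢ PhiHatPos n₂ := by
  ext ⟨a, b⟩
  simp only [PhiPos, PhiHatPos, eps, eta, epsHat, Set.mem_union, Set.mem_ofPred_eq, Set.mem_prod,
    Set.mem_singleton_iff, Prod.ext_iff, Prod.fst_sub, Prod.snd_sub, sub_zero]
  aesop

lemma PhiNeg_eq (n₁ n₂ : ℕ) :
    PhiNeg n₁ n₂ = PhiHatNeg n₁ ×ˢ {0} ∪ {0} ×ˢ PhiHatNeg n₂ := by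
  simp only [PhiNeg, PhiHatNeg, Set.image_neg_eq_neg, PhiPos_eq, Set.union_neg, Set.neg_prod,
    Set.neg_singleton, neg_zero]

lemma wAct_image_PhiPos {n₁ n₂ : ℕ} (u : Perm (Fin n₁) × Perm (Fin n₂)) :
    wAct u '' PhiPos n₁ n₂ =
      (hatAct u.1 '' PhiHatPos n₁) ×ˢ {0} ∪ {0} ×ˢ (hatAct u.2 '' PhiHatPos n₂) := by
  have hwAct : wAct u = Prod.map (hatAct u.1) (hatAct u.2) := rfl
  rw [PhiPos_eq, Set.image_union, hwAct, Set.prodMap_image_prod, Set.prodMap_image_prod,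
    Set.image_singleton, Set.image_singleton]
  rfl

lemma prod_zero_union_zero_prod_inter {α β : Type*} [Zero α] [Zero β] {s s' : Set α}
    {t t' : Set β} (hs : (0 : α) ∉ s) (ht : (0 : β) ∉ t) :
    (s ×ˢ {0} ∪ {0} ×ˢ t) ∩ (s' ×ˢ {0} ∪ {0} ×ˢ t') = (s ∩ s') ×ˢ {0} ∪ {0} ×ˢ (t ∩ t') := by
  ext ⟨a, b⟩
  simp only [Set.mem_inter_iff, Set.mem_union, Set.mem_prod, Set.mem_singleton_iff]
  aesop

lemma Phi_eq {n₁ n₂ : ℕ} (u : Perm (Fin n₁) × Perm (Fin n₂)) :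
    Phi u = PhiHat u.1 ×ˢ {0} ∪ {0} ×ˢ PhiHat u.2 := by
  rw [Phi, PhiNeg_eq, wAct_image_PhiPos,
    prod_zero_union_zero_prod_inter (zero_notMem_PhiHatNeg _) (zero_notMem_PhiHatNeg _)]
  rfl

lemma Phi_swap_swap {n₁ n₂ : ℕ} {i i' : Fin n₁} {j j' : Fin n₂} (hi' : (i' : ℕ) = i + 1)
    (hj' : (j' : ℕ) = j + 1) :
    Phi (swap i i', swap j j') = {(eps i' - eps i : L n₁ n₂), eta j' - eta j} := by
  rw [Phi_eq, PhiHat_swap hi', PhiHat_swap hj', Set.singleton_prod_singleton,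
    Set.singleton_prod_singleton, Set.singleton_union]
  simp [eps, eta, epsHat]

lemma eps_sub_eps_ne_eta_sub_eta {n₁ n₂ : ℕ} {a b : Fin n₁} (hab : a ≠ b) (c d : Fin n₂) :
    (eps a - eps b : L n₁ n₂) ≠ eta c - eta d := by
  intro h
  simpa [eps, eta, hab] using congrFun (congrArg Prod.fst h) a

theorem config_C_general (n₁ n₂ : ℕ)
    (ρ : Lhat (n₁ * n₂) →ₗ[ℤ] L n₁ n₂)
    (hρ : ∀ (i : Fin n₁) (j : Fin n₂), ρ (epsHat (lex i j)) = eps i + eta j)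
    (wh : Perm (Fin (n₁ * n₂)))
    (k k₁ k₂ : Fin (n₁ * n₂)) (hk₁ : (k₁ : ℕ) = (k : ℕ) + 1) (hk₂ : (k₂ : ℕ) = (k : ℕ) + 2)
    (i i' : Fin n₁) (hi' : (i' : ℕ) = (i : ℕ) + 1)
    (j j' : Fin n₂) (hj' : (j' : ℕ) = (j : ℕ) + 1)
    (hwk : wh k = lex i j)
    (hwk₁₂ : ({wh k₁, wh k₂} : Set (Fin (n₁ * n₂))) = {lex i' j, lex i j'})
    (v : Perm (Fin n₁) × Perm (Fin n₂))
    (hv : v⁻¹ = (Equiv.swap i i', Equiv.swap j j'))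
    (vh : Perm (Fin (n₁ * n₂)))
    (hvh : vh⁻¹ = wh * cyc k k₁ k₂ * w0 (n₁ * n₂)) :
    hatAct wh '' PhiHat ((w0 (n₁ * n₂) * (vh * wh))⁻¹) =
      {epsHat (lex i' j) - epsHat (lex i j), epsHat (lex i j') - epsHat (lex i j)} ∧
    Phi v⁻¹ = {(eps i' - eps i : L n₁ n₂), eta j' - eta j} ∧
    Set.BijOn (⇑ρ) (hatAct wh '' PhiHat ((w0 (n₁ * n₂) * (vh * wh))⁻¹)) (Phi v⁻¹) := by
  have hcyc : (w0 (n₁ * n₂) * (vh * wh))⁻¹ = cyc k k₁ k₂ := by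
    rw [inv_eq_iff_eq_inv.mp hvh]
    group
  have hPhiHat : hatAct wh '' PhiHat ((w0 (n₁ * n₂) * (vh * wh))⁻¹) =
      {epsHat (lex i' j) - epsHat (lex i j), epsHat (lex i j') - epsHat (lex i j)} := by
    rw [hcyc, PhiHat_cyc hk₁ hk₂, Set.image_pair, hatAct_epsHat_sub_epsHat,
      hatAct_epsHat_sub_epsHat, hwk, ← Set.image_pair (fun p ↦ epsHat p - epsHat (lex i j)),
      hwk₁₂, Set.image_pair]
  have hPhi : Phi v⁻¹ = {(eps i' - eps i : L n₁ n₂), eta j' - eta j} := by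
    rw [hv, Phi_swap_swap hi' hj']
  have hρ₁ : ρ (epsHat (lex i' j) - epsHat (lex i j)) = eps i' - eps i := by
    rw [map_sub, hρ, hρ]
    abel
  have hρ₂ : ρ (epsHat (lex i j') - epsHat (lex i j)) = eta j' - eta j := by
    rw [map_sub, hρ, hρ]
    abel
  have hne : (eps i' - eps i : L n₁ n₂) ≠ eta j' - eta j :=
    eps_sub_eps_ne_eta_sub_eta (by simp [Fin.ext_iff, hi']) _ _
  refine ⟨hPhiHat, hPhi, ?_⟩
  rw [hPhiHat, hPhi, ← hρ₁, ← hρ₂, ← Set.image_pair]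
  exact (Set.injOn_pair.2 fun h ↦ absurd h (hρ₁ ▸ hρ₂ ▸ hne)).bijOn_image

/-- Configuration C: `ŵ(k) = (i,j)` and `{ŵ(k+1), ŵ(k+2)} = {(i+1,j), (i,j+1)}`;
with `v⁻¹ = ((i i+1), (j j+1))` and `v̂⁻¹ = ŵ (k k+1 k+2) ŵ₀`, the sets are as indicated
and `ρ` restricts to a bijection between them. -/
theorem config_C (n₁ n₂ : ℕ) (hn₁ : 0 < n₁) (hn₂ : 0 < n₂)
    (ρ : Lhat (n₁ * n₂) →ₗ[ℤ] L n₁ n₂)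
    (hρ : ∀ (i : Fin n₁) (j : Fin n₂), ρ (epsHat (lex i j)) = eps i + eta j)
    (wh : Perm (Fin (n₁ * n₂)))
    (k k₁ k₂ : Fin (n₁ * n₂)) (hk₁ : (k₁ : ℕ) = (k : ℕ) + 1) (hk₂ : (k₂ : ℕ) = (k : ℕ) + 2)
    (i i' : Fin n₁) (hi' : (i' : ℕ) = (i : ℕ) + 1)
    (j j' : Fin n₂) (hj' : (j' : ℕ) = (j : ℕ) + 1)
    (hwk : wh k = lex i j)
    (hwk₁₂ : ({wh k₁, wh k₂} : Set (Fin (n₁ * n₂))) = {lex i' j, lex i j'})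
    (v : Perm (Fin n₁) × Perm (Fin n₂))
    (hv : v⁻¹ = (Equiv.swap i i', Equiv.swap j j'))
    (vh : Perm (Fin (n₁ * n₂)))
    (hvh : vh⁻¹ = wh * cyc k k₁ k₂ * w0 (n₁ * n₂)) :
    hatAct wh '' PhiHat ((w0 (n₁ * n₂) * (vh * wh))⁻¹) =
      {epsHat (lex i' j) - epsHat (lex i j), epsHat (lex i j') - epsHat (lex i j)} ∧
    Phi v⁻¹ = {(eps i' - eps i : L n₁ n₂), eta j' - eta j} ∧
    Set.BijOn (⇑ρ) (hatAct wh '' PhiHat ((w0 (n₁ * n₂) * (vh * wh))⁻¹)) (Phi v⁻¹) :=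
  config_C_general n₁ n₂ ρ hρ wh k k₁ k₂ hk₁ hk₂ i i' hi' j j' hj' hwk hwk₁₂ v hv vh hvh
end
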